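/- arXiv:2002.02889 — 4 statements merged into one kernel-verified Lean document; each statement's English description precedes it below -/
import Mathlib

section
/- Let P, Q̃ be disjoint finite sets with |P| = 2r and |Q̃| = 2s+2, let l ≥ 0 and E ⊆ P ∪ Q̃ with e_p = |E ∩ P|, e_q = |E ∩ Q̃|. Define the score S'(l,E) = l + min(e_p, 2r - e_p) + min(e_q, 2s+2 - e_q). Then the maximum of f_{T,E,l} = (|E ∩ T| - |E ∩ T^c| + l)/2 over all subsets T = T_p ⊔ T_q with T_p ⊆ P, |T_p| = r, T_q ⊆ Q̃, |T_q| = s+1, equals S'(l,E)/2. -/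
/-!
STATEMENT 1: P, Q̃ disjoint finite sets, |P| = 2r, |Q̃| = 2s+2, l ≥ 0,
E ⊆ P ∪ Q̃ with |E| + l even. The maximum of
f_{T,E,l} = (|E ∩ T| - |E ∩ T^c| + l)/2 over all T with |T ∩ P| = r,
|T ∩ Q̃| = s+1 equals S'(l,E)/2, where
S'(l,E) = l + min(e_p, 2r - e_p) + min(e_q, 2s+2 - e_q).
(Values taken in ℚ; "max equals" is expressed as `IsGreatest`.)
-/
theorem stmt1 {α : Type*} [DecidableEq α] (P Q : Finset α) (hPQ : Disjoint P Q)
    (r s : ℕ) (hP : P.card = 2 * r) (hQ : Q.card = 2 * s + 2)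
    (l : ℕ) (E : Finset α) (hE : E ⊆ P ∪ Q) (hpar : Even (E.card + l)) :
    IsGreatest
      {x : ℚ | ∃ T ⊆ P ∪ Q, (T ∩ P).card = r ∧ (T ∩ Q).card = s + 1 ∧
        x = (((E ∩ T).card : ℚ) - ((E ∩ ((P ∪ Q) \ T)).card : ℚ) + l) / 2}
      (((l : ℚ)
        + ((min (E ∩ P).card (2 * r - (E ∩ P).card) : ℕ) : ℚ)
        + ((min (E ∩ Q).card (2 * s + 2 - (E ∩ Q).card) : ℕ) : ℚ)) / 2) := by
  classical
  set ep := (E ∩ P).card with hep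
  set eqq := (E ∩ Q).card with heqq
  set mp := min ep (2 * r - ep) with hmp
  set mq := min eqq (2 * s + 2 - eqq) with hmq
  set m1 := min ep r with hm1
  set m2 := min eqq (s + 1) with hm2
  have hepP : ep ≤ 2 * r := hP ▸ Finset.card_le_card Finset.inter_subset_right
  have heqQ : eqq ≤ 2 * s + 2 := hQ ▸ Finset.card_le_card Finset.inter_subset_right
  have id1 : 2 * m1 = ep + mp := by omega
  have id2 : 2 * m2 = eqq + mq := by omega
  have c3 : m1 + m2 ≤ ep + eqq := by omega
  have q1 : (2 * (m1 : ℚ)) = (ep : ℚ) + mp := by exact_mod_cast id1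
  have q2 : (2 * (m2 : ℚ)) = (eqq : ℚ) + mq := by exact_mod_cast id2
  have hEsplit : E ∩ P ∪ E ∩ Q = E := by
    rw [← Finset.inter_union_distrib_left, Finset.inter_eq_left.mpr hE]
  have hEcard : E.card = ep + eqq := by
    rw [← hEsplit, Finset.card_union_of_disjoint
      (hPQ.mono Finset.inter_subset_right Finset.inter_subset_right)]
  have hcompl : ∀ T : Finset α, (E ∩ ((P ∪ Q) \ T)).card = E.card - (E ∩ T).card := by
    intro T
    have h : E ∩ ((P ∪ Q) \ T) = E \ T := by
      rw [← Finset.inter_sdiff_assoc, Finset.inter_eq_left.mpr hE]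
    rw [h]
    have := Finset.card_inter_add_card_sdiff E T
    omega
  constructor
  · -- membership: construct the optimal T
    obtain ⟨A, hAsub, hAcard⟩ := Finset.exists_subset_card_eq
      (s := E ∩ P) (n := m1) (min_le_left _ _)
    obtain ⟨B, hBsub, hBcard⟩ := Finset.exists_subset_card_eq
      (s := E ∩ Q) (n := m2) (min_le_left _ _)
    obtain ⟨Tp, hATp, hTpP, hTpcard⟩ := Finset.exists_subsuperset_card_eq
      (hAsub.trans Finset.inter_subset_right) (n := r)
      (by omega) (by omega)
    obtain ⟨Tq, hBTq, hTqQ, hTqcard⟩ := Finset.exists_subsuperset_card_eq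
      (hBsub.trans Finset.inter_subset_right) (n := s + 1)
      (by omega) (by omega)
    have hTqP : Tq ∩ P = ∅ :=
      Finset.disjoint_iff_inter_eq_empty.mp (hPQ.symm.mono_left hTqQ)
    have hTpQ : Tp ∩ Q = ∅ :=
      Finset.disjoint_iff_inter_eq_empty.mp (hPQ.mono_left hTpP)
    have hETp : (E ∩ Tp).card = m1 := by
      apply le_antisymm
      · exact le_min (Finset.card_le_card (Finset.inter_subset_inter (subset_refl E) hTpP))
          ((Finset.card_le_card Finset.inter_subset_right).trans_eq hTpcard)
      · calc m1 = A.card := hAcard.symm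
          _ ≤ (E ∩ Tp).card := Finset.card_le_card
            (Finset.subset_inter (hAsub.trans Finset.inter_subset_left) hATp)
    have hETq : (E ∩ Tq).card = m2 := by
      apply le_antisymm
      · exact le_min (Finset.card_le_card (Finset.inter_subset_inter (subset_refl E) hTqQ))
          ((Finset.card_le_card Finset.inter_subset_right).trans_eq hTqcard)
      · calc m2 = B.card := hBcard.symm
          _ ≤ (E ∩ Tq).card := Finset.card_le_card
            (Finset.subset_inter (hBsub.trans Finset.inter_subset_left) hBTq)
    have hETcard : (E ∩ (Tp ∪ Tq)).card = m1 + m2 := by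
      rw [Finset.inter_union_distrib_left, Finset.card_union_of_disjoint
        (hPQ.mono (Finset.inter_subset_right.trans hTpP)
          (Finset.inter_subset_right.trans hTqQ)), hETp, hETq]
    refine ⟨Tp ∪ Tq, Finset.union_subset_union hTpP hTqQ, ?_, ?_, ?_⟩
    · rw [Finset.union_inter_distrib_right, hTqP, Finset.union_empty,
        Finset.inter_eq_left.mpr hTpP, hTpcard]
    · rw [Finset.union_inter_distrib_right, hTpQ, Finset.empty_union,
        Finset.inter_eq_left.mpr hTqQ, hTqcard]
    · rw [hcompl, hEcard, hETcard]
      congr 1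
      push_cast [Nat.cast_sub c3]
      linarith [q1, q2]
  · -- upper bound
    rintro x ⟨T, hT, hTP, hTQ, rfl⟩
    have hETsplit : E ∩ T = (E ∩ T ∩ P) ∪ (E ∩ T ∩ Q) := by
      rw [← Finset.inter_union_distrib_left,
        Finset.inter_eq_left.mpr ((Finset.inter_subset_right).trans hT)]
    have hbound : (E ∩ T).card ≤ m1 + m2 := by
      rw [hETsplit, Finset.card_union_of_disjoint
        (hPQ.mono Finset.inter_subset_right Finset.inter_subset_right)]
      have b1 : (E ∩ T ∩ P).card ≤ m1 := le_min
        (Finset.card_le_card (Finset.inter_subset_inter Finset.inter_subset_left (subset_refl P)))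
        (hTP ▸ Finset.card_le_card (Finset.inter_subset_inter Finset.inter_subset_right (subset_refl P)))
      have b2 : (E ∩ T ∩ Q).card ≤ m2 := le_min
        (Finset.card_le_card (Finset.inter_subset_inter Finset.inter_subset_left (subset_refl Q)))
        (hTQ ▸ Finset.card_le_card (Finset.inter_subset_inter Finset.inter_subset_right (subset_refl Q)))
      omega
    have haE : (E ∩ T).card ≤ ep + eqq := hEcard ▸ Finset.card_le_card Finset.inter_subset_left
    rw [hcompl, hEcard]
    have hq : ((E ∩ T).card : ℚ) ≤ (m1 : ℚ) + m2 := by exact_mod_cast hbound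
    gcongr ?_ / 2
    push_cast [Nat.cast_sub haE]
    linarith [q1, q2, hq]
end

section
/- With notation as in the score lemma, the maximum of -f_{T,E,l} over all subsets T with |T ∩ P| = r and |T ∩ Q̃| = s+1 equals S'(l,E)/2 - l. -/
/-!
STATEMENT 2: With the notation of the score lemma (P, Q̃ disjoint, |P| = 2r,
|Q̃| = 2s+2, l ≥ 0, E ⊆ P ∪ Q̃ with |E| + l even,
f_{T,E,l} = (|E∩T| - |E∩T^c| + l)/2,
S'(l,E) = l + min(e_p, 2r - e_p) + min(e_q, 2s+2 - e_q)),
the maximum of -f_{T,E,l} over all T with |T∩P| = r, |T∩Q̃| = s+1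
equals S'(l,E)/2 - l.
-/

/-- Helper: choose a `k`-subset of `S` meeting `E` as little as possible. -/
lemma stmt2_aux {α : Type*} [DecidableEq α] (S E : Finset α) (k : ℕ) (hk : k ≤ S.card) :
    ∃ A, A ⊆ S ∧ A.card = k ∧ (E ∩ A).card = k - min k (S.card - (E ∩ S).card) := by
  have hcs : (S ∩ E).card + (S \ E).card = S.card := Finset.card_inter_add_card_sdiff S E
  have hcs' : (S \ E).card = S.card - (E ∩ S).card := by
    rw [Finset.inter_comm E S]; omega
  by_cases h : k ≤ (S \ E).card
  · obtain ⟨A, hAsub, hAcard⟩ := Finset.exists_subset_card_eq h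
    refine ⟨A, hAsub.trans (Finset.sdiff_subset), hAcard, ?_⟩
    have hempty : E ∩ A = ∅ := by
      rw [Finset.eq_empty_iff_forall_notMem]
      intro a ha
      obtain ⟨h1, h2⟩ := Finset.mem_inter.mp ha
      exact (Finset.mem_sdiff.mp (hAsub h2)).2 h1
    rw [hempty, Finset.card_empty]
    omega
  · obtain ⟨A, hFA, hAS, hAcard⟩ :=
      Finset.exists_subsuperset_card_eq (Finset.sdiff_subset (s := S) (t := E))
        (by omega) hk
    refine ⟨A, hAS, hAcard, ?_⟩
    have hEA : E ∩ A = A \ (S \ E) := by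
      ext a
      simp only [Finset.mem_inter, Finset.mem_sdiff]
      constructor
      · rintro ⟨h1, h2⟩
        exact ⟨h2, fun hh => hh.2 h1⟩
      · rintro ⟨h1, h2⟩
        refine ⟨?_, h1⟩
        by_contra hne
        exact h2 ⟨hAS h1, hne⟩
    rw [hEA, Finset.card_sdiff_of_subset hFA]
    omega

theorem stmt2 {α : Type*} [DecidableEq α] (P Q : Finset α) (hPQ : Disjoint P Q)
    (r s : ℕ) (hP : P.card = 2 * r) (hQ : Q.card = 2 * s + 2)
    (l : ℕ) (E : Finset α) (hE : E ⊆ P ∪ Q) (hpar : Even (E.card + l)) :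
    IsGreatest
      {x : ℚ | ∃ T ⊆ P ∪ Q, (T ∩ P).card = r ∧ (T ∩ Q).card = s + 1 ∧
        x = -((((E ∩ T).card : ℚ) - ((E ∩ ((P ∪ Q) \ T)).card : ℚ) + l) / 2)}
      (((l : ℚ)
        + ((min (E ∩ P).card (2 * r - (E ∩ P).card) : ℕ) : ℚ)
        + ((min (E ∩ Q).card (2 * s + 2 - (E ∩ Q).card) : ℕ) : ℚ)) / 2 - l) := by
  have hEP : (E ∩ P).card ≤ 2 * r := hP ▸ Finset.card_le_card Finset.inter_subset_right
  have hEQ : (E ∩ Q).card ≤ 2 * s + 2 := hQ ▸ Finset.card_le_card Finset.inter_subset_right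
  have hdisjEPQ : Disjoint (E ∩ P) (E ∩ Q) :=
    (hPQ.mono Finset.inter_subset_right Finset.inter_subset_right)
  have hEcard : E.card = (E ∩ P).card + (E ∩ Q).card := by
    rw [← Finset.card_union_of_disjoint hdisjEPQ, ← Finset.inter_union_distrib_left,
      Finset.inter_eq_left.mpr hE]
  -- general fact: for T ⊆ P ∪ Q, E ∩ ((P∪Q)\T) = E \ T
  have hcompl : ∀ T : Finset α, E ∩ ((P ∪ Q) \ T) = E \ T := by
    intro T
    ext a
    simp only [Finset.mem_inter, Finset.mem_sdiff, Finset.mem_union]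
    constructor
    · rintro ⟨h1, _, h3⟩; exact ⟨h1, h3⟩
    · rintro ⟨h1, h2⟩
      exact ⟨h1, by simpa using hE h1, h2⟩
  have hsplitcard : ∀ T : Finset α, (E \ T).card = E.card - (E ∩ T).card := by
    intro T
    have := Finset.card_inter_add_card_sdiff E T
    omega
  constructor
  · -- membership: construct the optimal T
    obtain ⟨A, hAP, hAcard, hAE⟩ := stmt2_aux P E r (by omega)
    obtain ⟨B, hBQ, hBcard, hBE⟩ := stmt2_aux Q E (s + 1) (by omega)
    have hdAB : Disjoint A B := hPQ.mono hAP hBQ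
    refine ⟨A ∪ B, Finset.union_subset_union hAP hBQ, ?_, ?_, ?_⟩
    · have : (A ∪ B) ∩ P = A := by
        rw [Finset.union_inter_distrib_right, Finset.inter_eq_left.mpr hAP,
          Finset.disjoint_iff_inter_eq_empty.mp (hPQ.symm.mono_left hBQ), Finset.union_empty]
      rw [this, hAcard]
    · have : (A ∪ B) ∩ Q = B := by
        rw [Finset.union_inter_distrib_right, Finset.disjoint_iff_inter_eq_empty.mp (hPQ.mono_left hAP),
          Finset.inter_eq_left.mpr hBQ, Finset.empty_union]
      rw [this, hBcard]
    · have hET : (E ∩ (A ∪ B)).card = (E ∩ A).card + (E ∩ B).card := by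
        rw [Finset.inter_union_distrib_left]
        exact Finset.card_union_of_disjoint
          (hdAB.mono Finset.inter_subset_right Finset.inter_subset_right)
      rw [hcompl, hsplitcard, hET, hAE, hBE]
      have hle : (r - min r (P.card - (E ∩ P).card)) + ((s+1) - min (s+1) (Q.card - (E ∩ Q).card)) ≤ E.card := by
        omega
      rw [Nat.cast_sub hle]
      have hkey : E.card =
          2 * ((r - min r (P.card - (E ∩ P).card)) + ((s+1) - min (s+1) (Q.card - (E ∩ Q).card)))
          + min (E ∩ P).card (2 * r - (E ∩ P).card) + min (E ∩ Q).card (2 * s + 2 - (E ∩ Q).card) := by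
        omega
      have hkeyQ : (E.card : ℚ) =
          2 * (((r - min r (P.card - (E ∩ P).card)) + ((s+1) - min (s+1) (Q.card - (E ∩ Q).card)) : ℕ) : ℚ)
          + ((min (E ∩ P).card (2 * r - (E ∩ P).card) : ℕ) : ℚ)
          + ((min (E ∩ Q).card (2 * s + 2 - (E ∩ Q).card) : ℕ) : ℚ) := by
        exact_mod_cast congrArg (Nat.cast : ℕ → ℚ) hkey
      push_cast
      push_cast at hkeyQ
      linarith
  · -- upper bound
    rintro x ⟨T, hT, hTP, hTQ, hx⟩
    have hETsplit : (E ∩ T).card = (E ∩ T ∩ P).card + (E ∩ T ∩ Q).card := by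
      have hd : Disjoint (E ∩ T ∩ P) (E ∩ T ∩ Q) :=
        hPQ.mono Finset.inter_subset_right Finset.inter_subset_right
      have heq : E ∩ T = (E ∩ T ∩ P) ∪ (E ∩ T ∩ Q) := by
        ext a
        simp only [Finset.mem_inter, Finset.mem_union]
        constructor
        · rintro ⟨h1, h2⟩
          rcases Finset.mem_union.mp (hE h1) with h | h
          · exact Or.inl ⟨⟨h1, h2⟩, h⟩
          · exact Or.inr ⟨⟨h1, h2⟩, h⟩
        · rintro (⟨⟨h1, h2⟩, _⟩ | ⟨⟨h1, h2⟩, _⟩) <;> exact ⟨h1, h2⟩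
      conv_lhs => rw [heq]
      exact (Finset.card_union_of_disjoint hd)
    have hPTcard : (P \ T).card = r := by
      have := Finset.card_inter_add_card_sdiff P T
      rw [Finset.inter_comm P T] at this
      omega
    have hQTcard : (Q \ T).card = s + 1 := by
      have := Finset.card_inter_add_card_sdiff Q T
      rw [Finset.inter_comm Q T] at this
      omega
    have hboundP : (E ∩ P).card ≤ (E ∩ T ∩ P).card + r := by
      have hsub : E ∩ P ⊆ (E ∩ T ∩ P) ∪ (P \ T) := by
        intro a ha
        obtain ⟨h1, h2⟩ := Finset.mem_inter.mp ha
        by_cases hat : a ∈ T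
        · exact Finset.mem_union_left _ (by simp [h1, h2, hat])
        · exact Finset.mem_union_right _ (Finset.mem_sdiff.mpr ⟨h2, hat⟩)
      calc (E ∩ P).card ≤ ((E ∩ T ∩ P) ∪ (P \ T)).card := Finset.card_le_card hsub
        _ ≤ (E ∩ T ∩ P).card + (P \ T).card := Finset.card_union_le _ _
        _ = (E ∩ T ∩ P).card + r := by rw [hPTcard]
    have hboundQ : (E ∩ Q).card ≤ (E ∩ T ∩ Q).card + (s + 1) := by
      have hsub : E ∩ Q ⊆ (E ∩ T ∩ Q) ∪ (Q \ T) := by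
        intro a ha
        obtain ⟨h1, h2⟩ := Finset.mem_inter.mp ha
        by_cases hat : a ∈ T
        · exact Finset.mem_union_left _ (by simp [h1, h2, hat])
        · exact Finset.mem_union_right _ (Finset.mem_sdiff.mpr ⟨h2, hat⟩)
      calc (E ∩ Q).card ≤ ((E ∩ T ∩ Q) ∪ (Q \ T)).card := Finset.card_le_card hsub
        _ ≤ (E ∩ T ∩ Q).card + (Q \ T).card := Finset.card_union_le _ _
        _ = (E ∩ T ∩ Q).card + (s + 1) := by rw [hQTcard]
    have hkey : E.card ≤ 2 * (E ∩ T).card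
        + min (E ∩ P).card (2 * r - (E ∩ P).card) + min (E ∩ Q).card (2 * s + 2 - (E ∩ Q).card) := by
      omega
    have hkeyQ : (E.card : ℚ) ≤ 2 * ((E ∩ T).card : ℚ)
        + ((min (E ∩ P).card (2 * r - (E ∩ P).card) : ℕ) : ℚ)
        + ((min (E ∩ Q).card (2 * s + 2 - (E ∩ Q).card) : ℕ) : ℚ) := by
      exact_mod_cast hkey
    have hETle : (E ∩ T).card ≤ E.card := Finset.card_le_card Finset.inter_subset_left
    rw [hx, hcompl, hsplitcard, Nat.cast_sub hETle]
    push_cast at hkeyQ ⊢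
    linarith
end

section
/- Let |P| = 2r, |Q̃| = 2s+2, l ≥ 0, E ⊆ P ∪ Q̃ with |E| + l even, e_p = |E∩P|, e_q = |E∩Q̃|. Suppose (l,E) satisfies l + min(e_p, 2r+1-e_p) ≤ r-1 (group 1A). Then for every subset T with |T∩P| = r and |T∩Q̃| = s+1 we have f_{T,E,l} = (|E∩T| - |E∩T^c| + l)/2 ≤ (r+s)/2, with equality possible only if r+s is even, l + e_p = r - 1, e_q = s+1, E∩P ⊆ T∩P, and E∩Q̃ = T∩Q̃. -/
/-!
STATEMENT 3: |P| = 2r, |Q̃| = 2s+2 disjoint, l ≥ 0, E ⊆ P ∪ Q̃ with |E| + l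
even, and (l,E) in group 1A: l + min(e_p, 2r+1-e_p) ≤ r-1. Then for every T
with |T∩P| = r, |T∩Q̃| = s+1 we have f_{T,E,l} ≤ (r+s)/2, with equality
possible only if r+s is even, l + e_p = r-1, e_q = s+1, E∩P ⊆ T∩P and
E∩Q̃ = T∩Q̃.  (The inequality f ≤ (r+s)/2 is stated doubled over ℤ:
|E∩T| - |E∩T^c| + l ≤ r + s.)
-/
theorem stmt3 {α : Type*} [DecidableEq α] (P Q : Finset α) (hPQ : Disjoint P Q)
    (r s : ℕ) (hP : P.card = 2 * r) (hQ : Q.card = 2 * s + 2)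
    (l : ℕ) (E : Finset α) (hE : E ⊆ P ∪ Q) (hpar : Even (E.card + l))
    (h1A : (l : ℤ) + min ((E ∩ P).card : ℤ) (2 * r + 1 - ((E ∩ P).card : ℤ)) ≤ (r : ℤ) - 1) :
    ∀ T, T ⊆ P ∪ Q → (T ∩ P).card = r → (T ∩ Q).card = s + 1 →
      (((E ∩ T).card : ℤ) - ((E ∩ ((P ∪ Q) \ T)).card : ℤ) + l ≤ (r : ℤ) + s
      ∧ ((((E ∩ T).card : ℤ) - ((E ∩ ((P ∪ Q) \ T)).card : ℤ) + l = (r : ℤ) + s) →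
          Even (r + s) ∧ (l : ℤ) + ((E ∩ P).card : ℤ) = (r : ℤ) - 1 ∧
          (E ∩ Q).card = s + 1 ∧ E ∩ P ⊆ T ∩ P ∧ E ∩ Q = T ∩ Q)) := by
  intro T hT hTP hTQ
  -- split cardinalities along P and Q
  have split : ∀ X : Finset α, X ⊆ P ∪ Q → X.card = (X ∩ P).card + (X ∩ Q).card := by
    intro X hX
    rw [← Finset.card_union_of_disjoint
      (hPQ.mono Finset.inter_subset_right Finset.inter_subset_right),
      ← Finset.inter_union_distrib_left, Finset.inter_eq_left.mpr hX]
  have hET : E ∩ T ⊆ P ∪ Q := (Finset.inter_subset_left).trans hE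
  have hsplitET : (E ∩ T).card = (E ∩ T ∩ P).card + (E ∩ T ∩ Q).card := split _ hET
  have hsplitE : E.card = (E ∩ P).card + (E ∩ Q).card := split _ hE
  -- the complement part
  have hcompl : E ∩ ((P ∪ Q) \ T) = E \ T := by
    ext x
    simp only [Finset.mem_inter, Finset.mem_sdiff, Finset.mem_union]
    constructor
    · rintro ⟨hx, _, hnt⟩; exact ⟨hx, hnt⟩
    · rintro ⟨hx, hnt⟩
      exact ⟨hx, by simpa using hE hx, hnt⟩
  have hcard : (E ∩ T).card + (E \ T).card = E.card := Finset.card_inter_add_card_sdiff E T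
  -- basic inequalities
  have ha1 : (E ∩ T ∩ P).card ≤ (E ∩ P).card :=
    Finset.card_le_card (by intro x hx; simp only [Finset.mem_inter] at *; tauto)
  have hsub2 : E ∩ T ∩ P ⊆ T ∩ P := by
    intro x hx; simp only [Finset.mem_inter] at *; tauto
  have ha2 : (E ∩ T ∩ P).card ≤ r := hTP ▸ Finset.card_le_card hsub2
  have hb1sub : E ∩ T ∩ Q ⊆ E ∩ Q := by
    intro x hx; simp only [Finset.mem_inter] at *; tauto
  have hb1 : (E ∩ T ∩ Q).card ≤ (E ∩ Q).card := Finset.card_le_card hb1sub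
  have hsubq : E ∩ T ∩ Q ⊆ T ∩ Q := by
    intro x hx; simp only [Finset.mem_inter] at *; tauto
  have hb2 : (E ∩ T ∩ Q).card ≤ s + 1 := hTQ ▸ Finset.card_le_card hsubq
  rw [hcompl]
  obtain ⟨k, hk⟩ := hpar
  constructor
  · omega
  · intro heq
    have key : (E ∩ T ∩ P).card = (E ∩ P).card ∧ (E ∩ T ∩ Q).card = (E ∩ Q).card ∧
        (E ∩ Q).card = s + 1 ∧ (l : ℤ) + ((E ∩ P).card : ℤ) = (r : ℤ) - 1 := by
      omega
    obtain ⟨hkp, hkq, hq1, hq2⟩ := key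
    have hEPeq : E ∩ T ∩ P = E ∩ P :=
      Finset.eq_of_subset_of_card_le
        (by intro x hx; simp only [Finset.mem_inter] at *; tauto) (le_of_eq hkp.symm)
    have hEQeq : E ∩ T ∩ Q = E ∩ Q := Finset.eq_of_subset_of_card_le hb1sub (le_of_eq hkq.symm)
    have hEQT : E ∩ T ∩ Q = T ∩ Q :=
      Finset.eq_of_subset_of_card_le hsubq (by omega)
    refine ⟨⟨(r + s) / 2, by omega⟩, hq2, hq1, ?_, by rw [← hEQeq, hEQT]⟩
    rw [← hEPeq]
    intro x hx; simp only [Finset.mem_inter] at *; tauto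
end

section
/- Let F : D(A) → T be an exact functor of triangulated categories (D(A) the derived category of an abelian category A), and let 0 → A_1 → A_2 → ... → A_n → 0 be an exact sequence in A. Then for each i, the object F(A_i) lies in the triangulated subcategory of T generated by the objects F(A_j) for j ≠ i. -/
open CategoryTheory Limits Pretriangulated

/-!
STATEMENT 19: Let F : D(A) → T be an exact (triangulated) functor from the
derived category of an abelian category A to a triangulated category T, and
let 0 → A₁ → ⋯ → Aₙ → 0 be an exact sequence in A (encoded as an exact
`ComposableArrows` with zero objects at both ends).  Then for each i, the
object F(A_i) lies in the (isomorphism-closed) triangulated subcategory of T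
generated by the objects F(A_j), j ≠ i: i.e. every isomorphism-closed
triangulated subcategory 𝒮 containing all F(A_j), j ≠ i, contains F(A_i).
Objects of A are viewed in D(A) via the single-complex functor in degree 0.
-/

section
variable {A : Type*} [Category A] [Abelian A] {X Y Z : A}

lemma aux_w (f : X ⟶ Y) (g : Y ⟶ Z) (w : f ≫ g = 0) : image.ι f ≫ g = 0 := by
  rw [← cancel_epi (factorThruImage f), image.fac_assoc, w, comp_zero]

lemma aux_shortExact (f : X ⟶ Y) (g : Y ⟶ Z) (w : f ≫ g = 0)
    (hex : (ShortComplex.mk f g w).Exact) :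
    (ShortComplex.mk (image.ι f) (factorThruImage g) (by
      rw [← cancel_mono (image.ι g), Category.assoc, image.fac, zero_comp]
      exact aux_w f g w)).ShortExact := by
  have e1 : (ShortComplex.mk (image.ι f) g (aux_w f g w)).Exact := by
    refine (ShortComplex.exact_iff_of_epi_of_isIso_of_mono
      (S₁ := ShortComplex.mk f g w) (S₂ := ShortComplex.mk (image.ι f) g (aux_w f g w))
      { τ₁ := factorThruImage f, τ₂ := 𝟙 _, τ₃ := 𝟙 _,
        comm₁₂ := by simp, comm₂₃ := by simp }).1 hex
  have e2 : (ShortComplex.mk (image.ι f) (factorThruImage g) (by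
      rw [← cancel_mono (image.ι g), Category.assoc, image.fac, zero_comp]
      exact aux_w f g w)).Exact := by
    refine (ShortComplex.exact_iff_of_epi_of_isIso_of_mono
      (S₁ := ShortComplex.mk (image.ι f) (factorThruImage g) (by
        rw [← cancel_mono (image.ι g), Category.assoc, image.fac, zero_comp]
        exact aux_w f g w))
      (S₂ := ShortComplex.mk (image.ι f) g (aux_w f g w))
      { τ₁ := 𝟙 _, τ₂ := 𝟙 _, τ₃ := image.ι g,
        comm₁₂ := by simp, comm₂₃ := by simp }).2 e1
  exact ShortComplex.ShortExact.mk' e2 inferInstance inferInstance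

lemma aux_isZero_image_of_src (f : X ⟶ Y) (h : IsZero X) : IsZero (image f) := by
  have hf : f = 0 := h.eq_of_src f 0
  have : image.ι f = 0 := by
    rw [← cancel_epi (factorThruImage f), image.fac, hf, comp_zero]
  rw [IsZero.iff_id_eq_zero, ← cancel_mono (image.ι f), this, Category.id_comp, comp_zero]

lemma aux_isZero_image_of_tgt (f : X ⟶ Y) (h : IsZero Y) : IsZero (image f) := by
  rw [IsZero.iff_id_eq_zero, ← cancel_mono (image.ι f), zero_comp]
  exact h.eq_of_tgt _ _
end

theorem stmt19 {A : Type*} [Category A] [Abelian A] [HasDerivedCategory A]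
    {T : Type*} [Category T] [Preadditive T] [HasZeroObject T] [HasShift T ℤ]
    [∀ n : ℤ, (shiftFunctor T n).Additive] [Pretriangulated T]
    (F : DerivedCategory A ⥤ T) [F.CommShift ℤ] [F.IsTriangulated]
    (n : ℕ) (S : ComposableArrows A (n + 1)) (hS : S.Exact)
    (h0 : IsZero (S.obj 0)) (hlast : IsZero (S.obj (Fin.last (n + 1))))
    (𝒮 : ObjectProperty T) [𝒮.IsTriangulated]
    (hiso : ∀ {X Y : T}, (X ≅ Y) → 𝒮 X → 𝒮 Y)
    (i : Fin (n + 2)) (hi0 : i ≠ 0) (hilast : i ≠ Fin.last (n + 1))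
    (hgen : ∀ j : Fin (n + 2), j ≠ 0 → j ≠ Fin.last (n + 1) → j ≠ i →
      𝒮 (F.obj ((DerivedCategory.singleFunctor A 0).obj (S.obj j)))) :
    𝒮 (F.obj ((DerivedCategory.singleFunctor A 0).obj (S.obj i))) := by
  have hzeroP : ∀ (X : A), IsZero X →
      𝒮 (F.obj ((DerivedCategory.singleFunctor A 0).obj X)) := by
    intro X hX
    obtain ⟨Z, hZ, hZP⟩ := 𝒮.exists_prop_of_containsZero
    exact hiso (hZ.iso (F.map_isZero ((DerivedCategory.singleFunctor A 0).map_isZero hX))) hZP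
  have mem₂ : ∀ (S' : ShortComplex A), S'.ShortExact →
      𝒮 (F.obj ((DerivedCategory.singleFunctor A 0).obj S'.X₁)) →
      𝒮 (F.obj ((DerivedCategory.singleFunctor A 0).obj S'.X₃)) →
      𝒮 (F.obj ((DerivedCategory.singleFunctor A 0).obj S'.X₂)) := by
    intro S' hS' h1 h3
    obtain ⟨Y, hY, ⟨e⟩⟩ := 𝒮.ext_of_isTriangulatedClosed₂' (F.mapTriangle.obj hS'.singleTriangle)
      (F.map_distinguished _ hS'.singleTriangle_distinguished) h1 h3
    exact hiso e.symm hY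
  have mem₃ : ∀ (S' : ShortComplex A), S'.ShortExact →
      𝒮 (F.obj ((DerivedCategory.singleFunctor A 0).obj S'.X₁)) →
      𝒮 (F.obj ((DerivedCategory.singleFunctor A 0).obj S'.X₂)) →
      𝒮 (F.obj ((DerivedCategory.singleFunctor A 0).obj S'.X₃)) := by
    intro S' hS' h1 h2
    obtain ⟨Y, hY, ⟨e⟩⟩ := 𝒮.ext_of_isTriangulatedClosed₂' ((F.mapTriangle.obj hS'.singleTriangle).rotate)
      (rot_of_distTriang _ (F.map_distinguished _ hS'.singleTriangle_distinguished))
      h2 (𝒮.le_shift 1 _ h1)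
    exact hiso e.symm hY
  have mem₁ : ∀ (S' : ShortComplex A), S'.ShortExact →
      𝒮 (F.obj ((DerivedCategory.singleFunctor A 0).obj S'.X₂)) →
      𝒮 (F.obj ((DerivedCategory.singleFunctor A 0).obj S'.X₃)) →
      𝒮 (F.obj ((DerivedCategory.singleFunctor A 0).obj S'.X₁)) := by
    intro S' hS' h2 h3
    obtain ⟨Y, hY, ⟨e⟩⟩ := 𝒮.ext_of_isTriangulatedClosed₂' ((F.mapTriangle.obj hS'.singleTriangle).invRotate)
      (inv_rot_of_distTriang _ (F.map_distinguished _ hS'.singleTriangle_distinguished))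
      (𝒮.le_shift (-1) _ h3) h2
    exact hiso e.symm hY
  obtain ⟨m, hm⟩ := i
  have hm0 : m ≠ 0 := by rintro rfl; exact hi0 rfl
  have hmn : m ≠ n + 1 := by rintro rfl; exact hilast rfl
  have hgen' : ∀ (j : ℕ) (h1 : 1 ≤ j) (h2 : j ≤ n) (h3 : j ≠ m),
      𝒮 (F.obj ((DerivedCategory.singleFunctor A 0).obj (S.obj ⟨j, by omega⟩))) := by
    intro j h1 h2 h3
    refine hgen ⟨j, by omega⟩ ?_ ?_ ?_ <;>
      · simp only [ne_eq, Fin.ext_iff, Fin.val_last, Fin.val_zero]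
        omega
  have up : ∀ (j : ℕ) (hj : j < m), 𝒮 (F.obj ((DerivedCategory.singleFunctor A 0).obj
      (image (S.map' j (j+1) (by omega) (by omega))))) := by
    intro j
    induction j with
    | zero =>
      intro _
      exact hzeroP _ (aux_isZero_image_of_src _ h0)
    | succ j IH =>
      intro hj
      have hses := aux_shortExact (S.map' j (j+1) (by omega) (by omega))
        (S.map' (j+1) (j+2) (by omega) (by omega))
        (hS.toIsComplex.zero' j (j+1) (j+2) rfl rfl (by omega))
        (hS.exact' j (j+1) (j+2) rfl rfl (by omega))
      exact mem₃ _ hses (IH (by omega)) (hgen' (j+1) (by omega) (by omega) (by omega))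
  have down : ∀ (d : ℕ) (j : ℕ) (hd : j + d = n) (hmj : m ≤ j),
      𝒮 (F.obj ((DerivedCategory.singleFunctor A 0).obj
        (image (S.map' j (j+1) (by omega) (by omega))))) := by
    intro d
    induction d with
    | zero =>
      intro j hd hmj
      obtain rfl : j = n := by omega
      exact hzeroP _ (aux_isZero_image_of_tgt _ hlast)
    | succ d IH =>
      intro j hd hmj
      have hses := aux_shortExact (S.map' j (j+1) (by omega) (by omega))
        (S.map' (j+1) (j+2) (by omega) (by omega))
        (hS.toIsComplex.zero' j (j+1) (j+2) rfl rfl (by omega))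
        (hS.exact' j (j+1) (j+2) rfl rfl (by omega))
      exact mem₁ _ hses (hgen' (j+1) (by omega) (by omega) (by omega))
        (IH (j+1) (by omega) (by omega))
  obtain ⟨m', rfl⟩ : ∃ m', m = m' + 1 := ⟨m - 1, by omega⟩
  have hses := aux_shortExact (S.map' m' (m'+1) (by omega) (by omega))
    (S.map' (m'+1) (m'+2) (by omega) (by omega))
    (hS.toIsComplex.zero' m' (m'+1) (m'+2) rfl rfl (by omega))
    (hS.exact' m' (m'+1) (m'+2) rfl rfl (by omega))
  exact mem₂ _ hses (up m' (by omega)) (down (n - (m'+1)) (m'+1) (by omega) (by omega))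
end
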